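/- arXiv:1212.1748 — 4 statements merged into one kernel-verified Lean document; each statement's English description precedes it below -/
import Mathlib

section
/- Let σ₁, σ₂, γ be p×p complex vessel parameters and A a bounded operator on a complex Hilbert space H. Suppose B(x) : ℂᵖ → H and 𝕏(x) : H → H are bounded-operator-valued differentiable functions satisfying (d/dx)(B(x))σ₁ = -A B(x) σ₂ - B(x) γ with B(0) = B₀, and (d/dx)𝕏(x) = B(x) σ₂ B(x)* with 𝕏(0) = 𝕏₀. If the initial data satisfy the Lyapunov equation A 𝕏₀ + 𝕏₀ A* + B₀ σ₁ B₀* = 0 and 𝕏₀* = 𝕏₀, then for every x ∈ ℝ the Lyapunov equation A 𝕏(x) + 𝕏(x) A* + B(x) σ₁ B(x)* = 0 holds and 𝕏(x)* = 𝕏(x). -/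
noncomputable section
open ContinuousLinearMap Matrix

/-- The continuous linear map on `EuclideanSpace ℂ (Fin n)` induced by a square matrix. -/
def mOp {n : ℕ} (m : Matrix (Fin n) (Fin n) ℂ) :
    EuclideanSpace ℂ (Fin n) →L[ℂ] EuclideanSpace ℂ (Fin n) :=
  Matrix.toEuclideanCLM (𝕜 := ℂ) m

section Aux

variable {E F G : Type*}
  [NormedAddCommGroup E] [InnerProductSpace ℂ E] [CompleteSpace E]
  [NormedAddCommGroup F] [InnerProductSpace ℂ F] [CompleteSpace F]
  [NormedAddCommGroup G] [InnerProductSpace ℂ G] [CompleteSpace G]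

/-- The adjoint as a real-linear continuous map. -/
def adjCLM : (E →L[ℂ] F) →L[ℝ] (F →L[ℂ] E) :=
  LinearMap.mkContinuous
    { toFun := fun T => ContinuousLinearMap.adjoint T
      map_add' := fun T S => by simp [map_add]
      map_smul' := fun r T => by
        have h : (r : ℝ) • T = ((r : ℂ)) • T := by
          rw [← algebraMap_smul ℂ r T]; rfl
        have h2 : (r : ℝ) • (ContinuousLinearMap.adjoint T) =
            ((r : ℂ)) • (ContinuousLinearMap.adjoint T) := by
          rw [← algebraMap_smul ℂ r (ContinuousLinearMap.adjoint T)]; rfl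
        simp only [RingHom.id_apply, h, h2, LinearIsometryEquiv.map_smulₛₗ]
        norm_num }
    1 (fun T => by
      simpa using (ContinuousLinearMap.adjoint (E := E) (F := F)).norm_map T)

@[simp] lemma adjCLM_apply (T : E →L[ℂ] F) :
    adjCLM T = ContinuousLinearMap.adjoint T := rfl

lemma isBoundedBilinearMap_compR :
    IsBoundedBilinearMap ℝ fun p : (F →L[ℂ] G) × (E →L[ℂ] F) => p.1.comp p.2 where
  add_left := fun f g h => ContinuousLinearMap.add_comp _ _ _
  smul_left := fun r f g => ContinuousLinearMap.smul_comp _ _ _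
  add_right := fun f g h => ContinuousLinearMap.comp_add _ _ _
  smul_right := fun r f g => by
    ext x
    simp
  bound := ⟨1, one_pos, fun f g => by
    simpa using ContinuousLinearMap.opNorm_comp_le f g⟩

lemma HasDerivAt.clm_compR {c : ℝ → F →L[ℂ] G} {c' : F →L[ℂ] G}
    {d : ℝ → E →L[ℂ] F} {d' : E →L[ℂ] F} {x : ℝ}
    (hc : HasDerivAt c c' x) (hd : HasDerivAt d d' x) :
    HasDerivAt (fun y => (c y).comp (d y)) (c'.comp (d x) + (c x).comp d') x := by
  have h := ((isBoundedBilinearMap_compR (E := E) (F := F) (G := G)).hasFDerivAt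
      (c x, d x)).comp_hasDerivAt x (hc.prodMk hd)
  simp [IsBoundedBilinearMap.deriv, add_comm] at h
  exact h

lemma hasDerivAt_adjoint {B : ℝ → E →L[ℂ] F} {B' : E →L[ℂ] F} {x : ℝ}
    (hB : HasDerivAt B B' x) :
    HasDerivAt (fun y => ContinuousLinearMap.adjoint (B y))
      (ContinuousLinearMap.adjoint B') x := by
  exact (adjCLM (E := E) (F := F)).hasFDerivAt.comp_hasDerivAt x hB

end Aux

lemma adjoint_mOp {n : ℕ} (m : Matrix (Fin n) (Fin n) ℂ) :
    ContinuousLinearMap.adjoint (mOp m) = mOp mᴴ := by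
  rw [mOp, mOp, ← ContinuousLinearMap.star_eq_adjoint, ← map_star,
    Matrix.star_eq_conjTranspose]

set_option maxHeartbeats 2000000 in
/-- If `B(x)`, `𝕏(x)` evolve according to the vessel equations and the initial data
satisfy the Lyapunov equation with `𝕏₀` self-adjoint, then the Lyapunov equation and
self-adjointness propagate to all `x`. -/
theorem lyapunov_equation_propagates
    {p : ℕ} {H : Type*} [NormedAddCommGroup H] [InnerProductSpace ℂ H] [CompleteSpace H]
    -- vessel parameters
    (σ₁ σ₂ γ : Matrix (Fin p) (Fin p) ℂ)
    (hσ₁ : σ₁ᴴ = σ₁) (hσ₁inv : IsUnit σ₁) (hσ₂ : σ₂ᴴ = σ₂) (hγ : γᴴ = -γ)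
    -- a bounded operator on H
    (A : H →L[ℂ] H)
    -- operator-valued functions
    (B : ℝ → (EuclideanSpace ℂ (Fin p) →L[ℂ] H))
    (X : ℝ → (H →L[ℂ] H))
    (B₀ : EuclideanSpace ℂ (Fin p) →L[ℂ] H) (X₀ : H →L[ℂ] H)
    (hBdiff : Differentiable ℝ B) (hXdiff : Differentiable ℝ X)
    -- (d/dx) B(x) σ₁ = -A B(x) σ₂ - B(x) γ,  B(0) = B₀
    (hDB : ∀ x : ℝ, (deriv B x) ∘L mOp σ₁ = -(A ∘L B x ∘L mOp σ₂) - B x ∘L mOp γ)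
    (hB0 : B 0 = B₀)
    -- (d/dx) 𝕏(x) = B(x) σ₂ B(x)*,  𝕏(0) = 𝕏₀
    (hDX : ∀ x : ℝ, deriv X x = B x ∘L mOp σ₂ ∘L adjoint (B x))
    (hX0 : X 0 = X₀)
    -- initial Lyapunov equation and self-adjointness
    (hLyap0 : A ∘L X₀ + X₀ ∘L adjoint A + B₀ ∘L mOp σ₁ ∘L adjoint B₀ = 0)
    (hX0sa : adjoint X₀ = X₀) :
    ∀ x : ℝ,
      A ∘L X x + X x ∘L adjoint A + B x ∘L mOp σ₁ ∘L adjoint (B x) = 0 ∧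
      adjoint (X x) = X x := by
  -- the Lyapunov function
  set F : ℝ → (H →L[ℂ] H) :=
    fun x => A ∘L X x + X x ∘L adjoint A + B x ∘L mOp σ₁ ∘L adjoint (B x) with hF
  set G : ℝ → (H →L[ℂ] H) := fun x => adjoint (X x) - X x with hG
  -- X'(x) is self adjoint
  have hXadj : ∀ x : ℝ, adjoint (deriv X x) = deriv X x := by
    intro x
    rw [hDX x]
    simp only [adjoint_comp, adjoint_adjoint, adjoint_mOp, hσ₂, comp_assoc]
  have hFderiv : ∀ x : ℝ, HasDerivAt F 0 x := by
    intro x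
    have hB' : HasDerivAt B (deriv B x) x := (hBdiff x).hasDerivAt
    have hX' : HasDerivAt X (deriv X x) x := (hXdiff x).hasDerivAt
    have hBadj : HasDerivAt (fun y => adjoint (B y)) (adjoint (deriv B x)) x :=
      hasDerivAt_adjoint hB'
    have h1 : HasDerivAt (fun y => A ∘L X y) (A ∘L deriv X x) x := by
      simpa using (hasDerivAt_const x A).clm_compR hX'
    have h2 : HasDerivAt (fun y => X y ∘L adjoint A) (deriv X x ∘L adjoint A) x := by
      simpa using hX'.clm_compR (hasDerivAt_const x (adjoint A))
    have h3 : HasDerivAt (fun y => mOp σ₁ ∘L adjoint (B y))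
        (mOp σ₁ ∘L adjoint (deriv B x)) x := by
      simpa using (hasDerivAt_const x (mOp σ₁)).clm_compR hBadj
    have h4 : HasDerivAt (fun y => B y ∘L mOp σ₁ ∘L adjoint (B y))
        (deriv B x ∘L (mOp σ₁ ∘L adjoint (B x)) +
          B x ∘L (mOp σ₁ ∘L adjoint (deriv B x))) x := hB'.clm_compR h3
    have hsum : HasDerivAt F
        (A ∘L deriv X x + deriv X x ∘L adjoint A +
          (deriv B x ∘L (mOp σ₁ ∘L adjoint (B x)) +
            B x ∘L (mOp σ₁ ∘L adjoint (deriv B x)))) x := (h1.add h2).add h4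
    -- now show the derivative is zero
    have key1 : deriv B x ∘L (mOp σ₁ ∘L adjoint (B x)) =
        (-(A ∘L B x ∘L mOp σ₂) - B x ∘L mOp γ) ∘L adjoint (B x) := by
      rw [← comp_assoc, hDB x]
    have key2 : mOp σ₁ ∘L adjoint (deriv B x) =
        adjoint (deriv B x ∘L mOp σ₁) := by
      rw [adjoint_comp, adjoint_mOp, hσ₁]
    have key2' : mOp σ₁ ∘L adjoint (deriv B x) =
        -(mOp σ₂ ∘L adjoint (B x) ∘L adjoint A) + mOp γ ∘L adjoint (B x) := by
      rw [key2, hDB x]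
      simp only [map_sub, map_neg, adjoint_comp, adjoint_mOp, hσ₂, hγ, map_neg]
      rw [show (mOp (-γ) : EuclideanSpace ℂ (Fin p) →L[ℂ] EuclideanSpace ℂ (Fin p))
          = -(mOp γ) from map_neg (Matrix.toEuclideanCLM (𝕜 := ℂ)) γ]
      simp only [comp_assoc, neg_comp]
      abel
    have hzero : A ∘L deriv X x + deriv X x ∘L adjoint A +
        (deriv B x ∘L (mOp σ₁ ∘L adjoint (B x)) +
          B x ∘L (mOp σ₁ ∘L adjoint (deriv B x))) = 0 := by
      rw [key1, key2', hDX x]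
      simp only [comp_assoc, sub_comp, neg_comp, comp_add, comp_neg, comp_sub, add_comp]
      abel
    rwa [hzero] at hsum
  have hGderiv : ∀ x : ℝ, HasDerivAt G 0 x := by
    intro x
    have hX' : HasDerivAt X (deriv X x) x := (hXdiff x).hasDerivAt
    have h := (hasDerivAt_adjoint hX').sub hX'
    rwa [hXadj x, sub_self] at h
  have hFconst : ∀ x : ℝ, F x = F 0 := by
    intro x
    exact is_const_of_deriv_eq_zero (fun y => (hFderiv y).differentiableAt)
      (fun y => (hFderiv y).deriv) x 0
  have hGconst : ∀ x : ℝ, G x = G 0 := by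
    intro x
    exact is_const_of_deriv_eq_zero (fun y => (hGderiv y).differentiableAt)
      (fun y => (hGderiv y).deriv) x 0
  intro x
  constructor
  · have := hFconst x
    rw [hF] at this
    simp only [hB0, hX0] at this
    rw [this, hLyap0]
  · have := hGconst x
    rw [hG] at this
    simp only [hX0, hX0sa, sub_self] at this
    exact sub_eq_zero.mp this
end
end

section
/- Consider the Sturm–Liouville vessel parameters p = 2, σ₁ = [[0,1],[1,0]], σ₂ = [[1,0],[0,0]], γ = [[0,0],[0,i]], and let H = ℂᴺ be finite-dimensional. Suppose A is an N×N complex matrix and B(x) : ℂ² → ℂᴺ, 𝕏(x) : ℂᴺ → ℂᴺ satisfy (d/dx)(B(x))σ₁ = -A B(x) σ₂ - B(x) γ, (d/dx)𝕏(x) = B(x) σ₂ B(x)*, the Lyapunov equation A 𝕏(x) + 𝕏(x) A* + B(x) σ₁ B(x)* = 0, 𝕏(x)* = 𝕏(x), and that 𝕏(x) is invertible with det(𝕏(0)⁻¹ 𝕏(x)) real and positive on an interval I. Fix λ ∉ spec(A) and let y(x) = (y₁(x), y₂(x)) be a solution of the output equation -σ₁ y'(x) + (σ₂ λ + γ₊(x))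 y(x) = 0, where γ₊(x) = γ + σ₂ H₀(x) σ₁ - σ₁ H₀(x) σ₂ and H₀(x) = B(x)* 𝕏(x)⁻¹ B(x). Then the first component y₁ satisfies the Sturm–Liouville equation -y₁''(x) + q(x) y₁(x) = -i λ y₁(x), where q(x) = -2 (d²/dx²) ln det(𝕏(0)⁻¹ 𝕏(x)). -/
noncomputable section
open ContinuousLinearMap Matrix

local notation "⟪" x ", " y "⟫" => @inner ℂ _ _ x y

namespace SLAux

lemma mOp_apply {n : ℕ} (m : Matrix (Fin n) (Fin n) ℂ) (z : EuclideanSpace ℂ (Fin n)) (i : Fin n) :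
    mOp m z i = ∑ j, m i j * z j := rfl

/-- matrix of a CLM on EuclideanSpace in the standard basis -/
def matOf {n : ℕ} (T : EuclideanSpace ℂ (Fin n) →L[ℂ] EuclideanSpace ℂ (Fin n)) :
    Matrix (Fin n) (Fin n) ℂ :=
  LinearMap.toMatrix (EuclideanSpace.basisFun (Fin n) ℂ).toBasis
    (EuclideanSpace.basisFun (Fin n) ℂ).toBasis (T : _ →ₗ[ℂ] _)

lemma matOf_entry {n : ℕ} (T : EuclideanSpace ℂ (Fin n) →L[ℂ] EuclideanSpace ℂ (Fin n))
    (i j : Fin n) : matOf T i j = T (EuclideanSpace.single j 1) i := by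
  simp [matOf, LinearMap.toMatrix_apply]

lemma matOf_mulVec {n : ℕ} (T : EuclideanSpace ℂ (Fin n) →L[ℂ] EuclideanSpace ℂ (Fin n))
    (z : EuclideanSpace ℂ (Fin n)) (i : Fin n) :
    (matOf T *ᵥ (fun j => z j)) i = T z i := by
  have := LinearMap.toMatrix_mulVec_repr (EuclideanSpace.basisFun (Fin n) ℂ).toBasis
    (EuclideanSpace.basisFun (Fin n) ℂ).toBasis (T : _ →ₗ[ℂ] _) z
  have h := congrFun this i
  simp [matOf] at h
  exact h

lemma det_eq_matOf {n : ℕ} (T : EuclideanSpace ℂ (Fin n) →L[ℂ] EuclideanSpace ℂ (Fin n)) :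
    LinearMap.det (T : EuclideanSpace ℂ (Fin n) →ₗ[ℂ] EuclideanSpace ℂ (Fin n)) = (matOf T).det :=
  (LinearMap.det_toMatrix _ _).symm

lemma matOf_mul {n : ℕ} (S T : EuclideanSpace ℂ (Fin n) →L[ℂ] EuclideanSpace ℂ (Fin n)) :
    matOf (S ∘L T) = matOf S * matOf T := by
  simp [matOf, ← LinearMap.toMatrix_comp]

lemma matOf_one {n : ℕ} : matOf (1 : EuclideanSpace ℂ (Fin n) →L[ℂ] EuclideanSpace ℂ (Fin n)) = 1 := by
  have h : ((1 : EuclideanSpace ℂ (Fin n) →L[ℂ] EuclideanSpace ℂ (Fin n)) :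
      EuclideanSpace ℂ (Fin n) →ₗ[ℂ] EuclideanSpace ℂ (Fin n)) = LinearMap.id := rfl
  rw [matOf, h, LinearMap.toMatrix_id]

lemma hasDerivAt_matrix_det {n : ℕ} {m : ℝ → Matrix (Fin n) (Fin n) ℂ}
    {m' : Matrix (Fin n) (Fin n) ℂ} {x : ℝ}
    (h : ∀ i j, HasDerivAt (fun s => m s i j) (m' i j) x) :
    HasDerivAt (fun s => (m s).det)
      (∑ i, (Matrix.updateCol (m x) i (fun k => m' k i)).det) x := by
  have key : HasDerivAt (fun s => ∑ σ : Equiv.Perm (Fin n),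
      (Equiv.Perm.sign σ : ℤ) • ∏ i, m s (σ i) i)
      (∑ σ : Equiv.Perm (Fin n), (Equiv.Perm.sign σ : ℤ) •
        (∑ i, (∏ j ∈ Finset.univ.erase i, m x (σ j) j) • m' (σ i) i)) x := by
    refine HasDerivAt.fun_sum (fun σ _ => ?_)
    exact (HasDerivAt.fun_finsetProd (fun i _ => h (σ i) i)).const_smul _
  have e1 : (fun s => (m s).det) = (fun s => ∑ σ : Equiv.Perm (Fin n),
      (Equiv.Perm.sign σ : ℤ) • ∏ i, m s (σ i) i) := by
    funext s; rw [Matrix.det_apply]; congr 1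
  rw [e1]
  convert key using 1
  have hdet : ∀ (i : Fin n), ((m x).updateCol i fun k => m' k i).det
      = ∑ σ : Equiv.Perm (Fin n), (Equiv.Perm.sign σ : ℤ) •
          ((∏ j ∈ Finset.univ.erase i, m x (σ j) j) • m' (σ i) i) := by
    intro i
    rw [Matrix.det_apply]
    refine Finset.sum_congr rfl (fun σ _ => ?_)
    congr 1
    rw [← Finset.mul_prod_erase Finset.univ _ (Finset.mem_univ i)]
    rw [smul_eq_mul, mul_comm, Matrix.updateCol_apply, if_pos rfl]
    congr 1
    exact Finset.prod_congr rfl (fun j hj => by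
      rw [Matrix.updateCol_apply, if_neg (Finset.ne_of_mem_erase hj)])
  simp_rw [hdet, Finset.smul_sum]
  rw [Finset.sum_comm]

lemma euclidean_eq_inner {k : ℕ} (w : EuclideanSpace ℂ (Fin k)) (i : Fin k) :
    w i = @inner ℂ _ _ (EuclideanSpace.single i (1:ℂ)) w := by
  simp [EuclideanSpace.inner_single_left]

lemma hasDerivAt_euclidean_apply {k : ℕ} {f : ℝ → EuclideanSpace ℂ (Fin k)}
    {f' : EuclideanSpace ℂ (Fin k)} {x : ℝ} (h : HasDerivAt f f' x) (i : Fin k) :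
    HasDerivAt (fun s => f s i) (f' i) x := by
  have := (hasDerivAt_const (𝕜 := ℝ) x (EuclideanSpace.single i (1:ℂ))).inner ℂ h
  simpa [EuclideanSpace.inner_single_left] using this

variable {F G : Type*} [NormedAddCommGroup F] [NormedSpace ℂ F]
  [NormedAddCommGroup G] [NormedSpace ℂ G]

lemma hasDerivAt_restrict {B : ℝ → F →L[ℂ] G} {B' : F →L[ℂ] G} {s : ℝ}
    (h : HasDerivAt B B' s) :
    HasDerivAt (fun t => (B t).restrictScalars ℝ) (B'.restrictScalars ℝ) s := by
  have := ((ContinuousLinearMap.restrictScalarsIsometry ℂ F G ℝ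
      ℝ).toContinuousLinearMap.hasFDerivAt).comp_hasDerivAt s h
  exact this

lemma clm_apply' {B : ℝ → F →L[ℂ] G} {B' : F →L[ℂ] G} {f : ℝ → F} {f' : F} {s : ℝ}
    (hB : HasDerivAt B B' s) (hf : HasDerivAt f f' s) :
    HasDerivAt (fun t => B t (f t)) (B' (f s) + B s f') s := by
  simpa using (hasDerivAt_restrict hB).clm_apply hf

lemma clm_apply_const {B : ℝ → F →L[ℂ] G} {B' : F →L[ℂ] G} {z : F} {s : ℝ}
    (hB : HasDerivAt B B' s) :
    HasDerivAt (fun t => B t z) (B' z) s := by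
  simpa using clm_apply' hB (hasDerivAt_const s z)

end SLAux

open SLAux

set_option maxHeartbeats 1000000 in
/-- For the Sturm–Liouville vessel parameters, the first component of any solution of the
output LDE satisfies the Sturm–Liouville equation `-y₁'' + q y₁ = -iλ y₁` with potential
`q(x) = -2 (d²/dx²) ln det(𝕏(0)⁻¹ 𝕏(x))`. -/
theorem SL_output_is_SturmLiouville
    {N : ℕ}
    -- Sturm–Liouville vessel parameters
    (σ₁ σ₂ γ : Matrix (Fin 2) (Fin 2) ℂ)
    (hσ₁ : σ₁ = !![0, 1; 1, 0]) (hσ₂ : σ₂ = !![1, 0; 0, 0])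
    (hγ : γ = !![0, 0; 0, Complex.I])
    -- an N×N complex matrix A
    (A : Matrix (Fin N) (Fin N) ℂ)
    (B : ℝ → (EuclideanSpace ℂ (Fin 2) →L[ℂ] EuclideanSpace ℂ (Fin N)))
    (X : ℝ → (EuclideanSpace ℂ (Fin N) →L[ℂ] EuclideanSpace ℂ (Fin N)))
    (I : Set ℝ) (hI : IsOpen I)
    (hBdiff : ∀ x ∈ I, DifferentiableAt ℝ B x) (hXdiff : ∀ x ∈ I, DifferentiableAt ℝ X x)
    -- vessel equations
    (hDB : ∀ x ∈ I, (deriv B x) ∘L mOp σ₁ = -(mOp A ∘L B x ∘L mOp σ₂) - B x ∘L mOp γ)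
    (hDX : ∀ x ∈ I, deriv X x = B x ∘L mOp σ₂ ∘L adjoint (B x))
    (hLyap : ∀ x ∈ I,
      mOp A ∘L X x + X x ∘L adjoint (mOp A) + B x ∘L mOp σ₁ ∘L adjoint (B x) = 0)
    (hXsa : ∀ x ∈ I, adjoint (X x) = X x)
    (hXinv : ∀ x ∈ I, IsUnit (X x))
    -- the tau function τ(x) = det(𝕏(0)⁻¹ 𝕏(x)) is real and positive on I
    (τ : ℝ → ℂ)
    (hτ : ∀ x, τ x = LinearMap.det ((Ring.inverse (X 0) ∘L X x :
        EuclideanSpace ℂ (Fin N) →L[ℂ] EuclideanSpace ℂ (Fin N)) :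
        EuclideanSpace ℂ (Fin N) →ₗ[ℂ] EuclideanSpace ℂ (Fin N)))
    (hτpos : ∀ x ∈ I, (τ x).im = 0 ∧ 0 < (τ x).re)
    -- the spectral parameter
    (lam : ℂ) (hlam : lam ∉ spectrum ℂ A)
    -- the linkage γ₊(x) = γ + σ₂ H₀ σ₁ - σ₁ H₀ σ₂ with H₀(x) = B(x)* 𝕏(x)⁻¹ B(x)
    (H₀ : ℝ → (EuclideanSpace ℂ (Fin 2) →L[ℂ] EuclideanSpace ℂ (Fin 2)))
    (hH₀ : ∀ x, H₀ x = adjoint (B x) ∘L Ring.inverse (X x) ∘L B x)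
    (Γ : ℝ → (EuclideanSpace ℂ (Fin 2) →L[ℂ] EuclideanSpace ℂ (Fin 2)))
    (hΓ : ∀ x, Γ x = mOp γ + mOp σ₂ ∘L H₀ x ∘L mOp σ₁ - mOp σ₁ ∘L H₀ x ∘L mOp σ₂)
    -- a solution y of the output LDE on I
    (y : ℝ → EuclideanSpace ℂ (Fin 2))
    (hy_diff : ∀ x ∈ I, DifferentiableAt ℝ y x)
    (hy : ∀ x ∈ I, -(mOp σ₁ (deriv y x)) + (lam • mOp σ₂ + Γ x) (y x) = 0)
    -- the potential q(x) = -2 (d²/dx²) ln τ(x)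
    (q : ℝ → ℝ)
    (hq : ∀ x, q x = -2 * iteratedDeriv 2 (fun s => Real.log (τ s).re) x)
    -- the first component of y
    (y₁ : ℝ → ℂ) (hy₁ : ∀ x, y₁ x = y x 0) :
    ∀ x ∈ I, -(iteratedDeriv 2 y₁ x) + (q x : ℂ) * y₁ x = -Complex.I * lam * y₁ x := by
  -- basis vectors
  set e0 : EuclideanSpace ℂ (Fin 2) := EuclideanSpace.single 0 1 with he0
  set e1 : EuclideanSpace ℂ (Fin 2) := EuclideanSpace.single 1 1 with he1
  -- scalar data
  set u : ℝ → EuclideanSpace ℂ (Fin N) := fun s => B s e0 with hu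
  set v : ℝ → EuclideanSpace ℂ (Fin N) := fun s => B s e1 with hv
  set W : ℝ → (EuclideanSpace ℂ (Fin N) →L[ℂ] EuclideanSpace ℂ (Fin N)) :=
    fun s => Ring.inverse (X s) with hW
  set a : ℝ → ℂ := fun s => ⟪u s, W s (u s)⟫ with ha
  set bb : ℝ → ℂ := fun s => ⟪u s, W s (v s)⟫ with hbb
  set cc : ℝ → ℂ := fun s => ⟪v s, W s (u s)⟫ with hcc
  set y2 : ℝ → ℂ := fun s => y s 1 with hy2
  -- actions of the parameter matrices
  have hσ₁app : ∀ w : EuclideanSpace ℂ (Fin 2), mOp σ₁ w = (w 1) • e0 + (w 0) • e1 := by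
    intro w; ext i; fin_cases i <;>
      simp [mOp_apply, hσ₁, Fin.sum_univ_two, he0, he1, PiLp.add_apply, PiLp.smul_apply,
        EuclideanSpace.single_apply]
  have hσ₂app : ∀ w : EuclideanSpace ℂ (Fin 2), mOp σ₂ w = (w 0) • e0 := by
    intro w; ext i; fin_cases i <;>
      simp [mOp_apply, hσ₂, Fin.sum_univ_two, he0, PiLp.smul_apply,
        EuclideanSpace.single_apply]
  have hγapp : ∀ w : EuclideanSpace ℂ (Fin 2), mOp γ w = (Complex.I * w 1) • e1 := by
    intro w; ext i; fin_cases i <;>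
      simp [mOp_apply, hγ, Fin.sum_univ_two, he1, PiLp.smul_apply,
        EuclideanSpace.single_apply]
  have he0c : ∀ (i : Fin 2), e0 i = if i = 0 then 1 else 0 := by
    intro i; rw [he0, EuclideanSpace.single_apply]
  have he1c : ∀ (i : Fin 2), e1 i = if i = 1 then 1 else 0 := by
    intro i; rw [he1, EuclideanSpace.single_apply]
  -- derivative of u and v
  have hu' : ∀ s ∈ I, HasDerivAt u (-(Complex.I • v s)) s := by
    intro s hs
    have hB := (hBdiff s hs).hasDerivAt
    have h0 : HasDerivAt u (deriv B s e0) s := clm_apply_const hB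
    have h1 := congrArg (fun T => T e1) (hDB s hs)
    simp only [ContinuousLinearMap.comp_apply, ContinuousLinearMap.coe_comp',
      Function.comp_apply, ContinuousLinearMap.sub_apply, ContinuousLinearMap.neg_apply] at h1
    rw [hσ₁app e1, hσ₂app e1, hγapp e1] at h1
    norm_num [he0c, he1c] at h1
    rwa [h1] at h0
  have hv' : ∀ s ∈ I, HasDerivAt v (-(mOp A (u s))) s := by
    intro s hs
    have hB := (hBdiff s hs).hasDerivAt
    have h0 : HasDerivAt v (deriv B s e1) s := clm_apply_const hB
    have h1 := congrArg (fun T => T e0) (hDB s hs)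
    simp only [ContinuousLinearMap.comp_apply, ContinuousLinearMap.coe_comp',
      Function.comp_apply, ContinuousLinearMap.sub_apply, ContinuousLinearMap.neg_apply] at h1
    rw [hσ₁app e0, hσ₂app e0, hγapp e0] at h1
    norm_num [he0c, he1c] at h1
    rwa [h1] at h0
  -- inverse facts
  have hWX : ∀ s ∈ I, W s * X s = 1 := fun s hs => Ring.inverse_mul_cancel _ (hXinv s hs)
  have hXW : ∀ s ∈ I, X s * W s = 1 := fun s hs => Ring.mul_inverse_cancel _ (hXinv s hs)
  -- rank one derivative of X
  have hX' : ∀ s ∈ I, ∀ z, deriv X s z = ⟪u s, z⟫ • u s := by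
    intro s hs z
    rw [hDX s hs]
    simp only [ContinuousLinearMap.comp_apply, ContinuousLinearMap.coe_comp',
      Function.comp_apply]
    rw [hσ₂app]
    have hz : (adjoint (B s) z) 0 = ⟪u s, z⟫ := by
      rw [euclidean_eq_inner ((adjoint (B s)) z) 0, ContinuousLinearMap.adjoint_inner_right]
    rw [hz, ContinuousLinearMap.map_smul]
  -- derivative of W
  have hW' : ∀ s ∈ I, HasDerivAt W (-(W s * deriv X s * W s)) s := by
    intro s hs
    obtain ⟨U, hU⟩ := hXinv s hs
    have hdX := (hXdiff s hs).hasDerivAt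
    have hWU : W s = (↑U⁻¹ : EuclideanSpace ℂ (Fin N) →L[ℂ] EuclideanSpace ℂ (Fin N)) := by
      rw [hW]; simp only [← hU, Ring.inverse_unit]
    have hinv := hasFDerivAt_ringInverse (𝕜 := ℝ)
      (R := EuclideanSpace ℂ (Fin N) →L[ℂ] EuclideanSpace ℂ (Fin N)) U
    rw [hU] at hinv
    have h2 : HasDerivAt W
        ((-(ContinuousLinearMap.mulLeftRight ℝ _ ↑U⁻¹ ↑U⁻¹)) (deriv X s)) s :=
      hinv.comp_hasDerivAt s hdX
    rw [ContinuousLinearMap.neg_apply, ContinuousLinearMap.mulLeftRight_apply] at h2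
    rw [hWU]
    exact h2
  -- derivative of a
  have ha' : ∀ s ∈ I, HasDerivAt a
      (Complex.I * cc s - Complex.I * bb s - a s * a s) s := by
    intro s hs
    have hg : HasDerivAt (fun t => W t (u t))
        ((-(W s * deriv X s * W s)) (u s) + W s (-(Complex.I • v s))) s :=
      clm_apply' (hW' s hs) (hu' s hs)
    have h2 := (hu' s hs).inner ℂ hg
    refine h2.congr_deriv ?_
    have e1 : (-(W s * deriv X s * W s)) (u s) = -(a s • W s (u s)) := by
      rw [ContinuousLinearMap.neg_apply, ContinuousLinearMap.mul_apply,
        ContinuousLinearMap.mul_apply, hX' s hs, ContinuousLinearMap.map_smul]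
    have e2 : W s (-(Complex.I • v s)) = -(Complex.I • W s (v s)) := by
      rw [map_neg, ContinuousLinearMap.map_smul]
    rw [e1, e2]
    simp only [ha, hbb, hcc, inner_add_right, inner_neg_right, inner_neg_left,
      inner_smul_right, inner_smul_left, Complex.conj_I]
    ring
  -- self-adjointness of W, reality
  have hWsa : ∀ s ∈ I, adjoint (W s) = W s := by
    intro s hs
    have h1 := hXW s hs
    have hstar : star (W s) * X s = 1 := by
      have h3 := congrArg star h1
      rw [StarMul.star_mul, star_one] at h3
      rwa [ContinuousLinearMap.star_eq_adjoint (X s), hXsa s hs] at h3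
    have : star (W s) = W s := by
      calc star (W s) = star (W s) * (X s * W s) := by rw [h1, mul_one]
        _ = (star (W s) * X s) * W s := by rw [mul_assoc]
        _ = W s := by rw [hstar, one_mul]
    rw [← ContinuousLinearMap.star_eq_adjoint, this]
  have hareal : ∀ s ∈ I, (starRingEnd ℂ) (a s) = a s := by
    intro s hs
    calc (starRingEnd ℂ) (a s) = ⟪W s (u s), u s⟫ := by rw [ha, inner_conj_symm]
      _ = ⟪adjoint (W s) (u s), u s⟫ := by rw [hWsa s hs]
      _ = ⟪u s, W s (u s)⟫ := ContinuousLinearMap.adjoint_inner_left _ _ _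
      _ = a s := by rw [ha]
  have hbc : ∀ s ∈ I, bb s = (starRingEnd ℂ) (cc s) := by
    intro s hs
    have : (starRingEnd ℂ) (cc s) = bb s := by
      calc (starRingEnd ℂ) (cc s) = ⟪W s (u s), v s⟫ := by rw [hcc, inner_conj_symm]
        _ = ⟪adjoint (W s) (u s), v s⟫ := by rw [hWsa s hs]
        _ = ⟪u s, W s (v s)⟫ := ContinuousLinearMap.adjoint_inner_left _ _ _
        _ = bb s := by rw [hbb]
    exact this.symm
  -- derivative of τ
  have hτfun : ∀ t, τ t = (matOf (Ring.inverse (X 0))).det * (matOf (X t)).det := by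
    intro t
    rw [hτ t, ContinuousLinearMap.toLinearMap_comp, LinearMap.det_comp, det_eq_matOf, det_eq_matOf]
  have hτ' : ∀ s ∈ I, HasDerivAt τ (τ s * a s) s := by
    intro s hs
    have hdX := (hXdiff s hs).hasDerivAt
    have hent : ∀ i j : Fin N, HasDerivAt (fun t => matOf (X t) i j)
        (matOf (deriv X s) i j) s := by
      intro i j
      have h1 : HasDerivAt (fun t => X t (EuclideanSpace.single j 1))
          ((deriv X s) (EuclideanSpace.single j 1)) s := clm_apply_const hdX
      have h2 := hasDerivAt_euclidean_apply h1 i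
      simpa only [matOf_entry] using h2
    have hdet : HasDerivAt (fun t => (matOf (X t)).det)
        (∑ i, (Matrix.updateCol (matOf (X s)) i (fun k => matOf (deriv X s) k i)).det) s :=
      hasDerivAt_matrix_det hent
    set dC : ℂ := (matOf (Ring.inverse (X 0))).det with hdC
    have hτd : HasDerivAt τ
        (dC * ∑ i, (Matrix.updateCol (matOf (X s)) i
          (fun k => matOf (deriv X s) k i)).det) s := by
      have hfx : τ = fun t => dC * (matOf (X t)).det := funext hτfun
      rw [hfx]
      exact hdet.const_mul dC
    convert hτd using 1
    -- identity : τ s * a s = dC * Σ_i det(updateCol …)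
    set M := matOf (X s) with hM
    set u0 : Fin N → ℂ := fun k => u s k with hu0
    -- matrix inverses
    have hXWs := hXW s hs
    rw [ContinuousLinearMap.mul_def] at hXWs
    have hWXs := hWX s hs
    rw [ContinuousLinearMap.mul_def] at hWXs
    have hMW : M * matOf (W s) = 1 := by rw [hM, ← matOf_mul, hXWs, matOf_one]
    have hWM : matOf (W s) * M = 1 := by rw [hM, ← matOf_mul, hWXs, matOf_one]
    -- adjugate identity
    have hAdj : Matrix.adjugate M *ᵥ u0 = M.det • (matOf (W s) *ᵥ u0) := by
      have h1 : M *ᵥ (Matrix.adjugate M *ᵥ u0) = M.det • u0 := by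
        rw [Matrix.mulVec_mulVec, Matrix.mul_adjugate, Matrix.smul_mulVec,
          Matrix.one_mulVec]
      calc Matrix.adjugate M *ᵥ u0
          = (matOf (W s) * M) *ᵥ (Matrix.adjugate M *ᵥ u0) := by rw [hWM, Matrix.one_mulVec]
        _ = matOf (W s) *ᵥ (M *ᵥ (Matrix.adjugate M *ᵥ u0)) := by rw [← Matrix.mulVec_mulVec]
        _ = matOf (W s) *ᵥ (M.det • u0) := by rw [h1]
        _ = M.det • (matOf (W s) *ᵥ u0) := by rw [Matrix.mulVec_smul]
    -- each column
    have hcol : ∀ i, (fun k => matOf (deriv X s) k i)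
        = (starRingEnd ℂ) (u s i) • u0 := by
      intro i
      funext k
      rw [matOf_entry, hX' s hs]
      simp [EuclideanSpace.inner_single_right, hu0, PiLp.smul_apply, smul_eq_mul]
    have hsum : (∑ i, (Matrix.updateCol M i (fun k => matOf (deriv X s) k i)).det)
        = M.det * ∑ i, (starRingEnd ℂ) (u s i) * (W s (u s) i) := by
      rw [Finset.mul_sum]
      refine Finset.sum_congr rfl (fun i _ => ?_)
      rw [hcol i, ← Matrix.cramer_apply, Matrix.cramer_eq_adjugate_mulVec,
        Matrix.mulVec_smul, hAdj]
      have : (matOf (W s) *ᵥ u0) i = W s (u s) i := matOf_mulVec (W s) (u s) i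
      simp [this, smul_eq_mul]
      ring
    rw [hsum, hτfun s]
    have hainner : a s = ∑ i, (starRingEnd ℂ) (u s i) * (W s (u s) i) := by
      simp [ha, PiLp.inner_apply, RCLike.inner_apply, mul_comm]
    rw [hainner]
    ring
  -- the H₀ entries
  have hH : ∀ s, ∀ z : EuclideanSpace ℂ (Fin 2), ∀ i : Fin 2,
      H₀ s z i = ⟪B s (EuclideanSpace.single i 1), W s (B s z)⟫ := by
    intro s z i
    rw [hH₀ s]
    simp only [ContinuousLinearMap.coe_comp', Function.comp_apply]
    rw [euclidean_eq_inner ((adjoint (B s)) ((Ring.inverse (X s)) ((B s) z))) i,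
      ContinuousLinearMap.adjoint_inner_right]
  -- component lemmas for the 2×2 matrix actions
  have hσ₁c0 : ∀ w : EuclideanSpace ℂ (Fin 2), (mOp σ₁ w) 0 = w 1 := by
    intro w; rw [hσ₁app]; simp [he0c, he1c, PiLp.add_apply, PiLp.smul_apply]
  have hσ₁c1 : ∀ w : EuclideanSpace ℂ (Fin 2), (mOp σ₁ w) 1 = w 0 := by
    intro w; rw [hσ₁app]; simp [he0c, he1c, PiLp.add_apply, PiLp.smul_apply]
  have hσ₂c0 : ∀ w : EuclideanSpace ℂ (Fin 2), (mOp σ₂ w) 0 = w 0 := by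
    intro w; rw [hσ₂app]; simp [he0c, PiLp.smul_apply]
  have hσ₂c1 : ∀ w : EuclideanSpace ℂ (Fin 2), (mOp σ₂ w) 1 = 0 := by
    intro w; rw [hσ₂app]; simp [he0c, PiLp.smul_apply]
  have hγc0 : ∀ w : EuclideanSpace ℂ (Fin 2), (mOp γ w) 0 = 0 := by
    intro w; rw [hγapp]; simp [he1c, PiLp.smul_apply]
  have hγc1 : ∀ w : EuclideanSpace ℂ (Fin 2), (mOp γ w) 1 = Complex.I * w 1 := by
    intro w; rw [hγapp]; simp [he1c, PiLp.smul_apply]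
  -- H₀ values
  have hz1 : ∀ s, H₀ s (mOp σ₁ (y s)) 0 = y s 1 * a s + y s 0 * bb s := by
    intro s
    rw [hH s _ 0, hσ₁app (y s)]
    simp [map_add, ContinuousLinearMap.map_smul, inner_add_right, inner_smul_right,
      ha, hbb, hu, hv, he0, he1]
  have hz20 : ∀ s, H₀ s (mOp σ₂ (y s)) 0 = y s 0 * a s := by
    intro s
    rw [hH s _ 0, hσ₂app (y s)]
    simp [ContinuousLinearMap.map_smul, inner_smul_right, ha, hu, he0]
  have hz21 : ∀ s, H₀ s (mOp σ₂ (y s)) 1 = y s 0 * cc s := by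
    intro s
    rw [hH s _ 1, hσ₂app (y s)]
    simp [ContinuousLinearMap.map_smul, inner_smul_right, hcc, hu, hv, he0, he1]
  -- component ODEs for y
  have hkey : ∀ s ∈ I, (deriv y s) 0 = -(a s) * y₁ s + Complex.I * y2 s ∧
      (deriv y s) 1 = (lam + bb s - cc s) * y₁ s + a s * y2 s := by
    intro s hs
    have heq : mOp σ₁ (deriv y s) = (lam • mOp σ₂ + Γ s) (y s) := by
      have h := hy s hs
      rwa [neg_add_eq_zero] at h
    rw [hΓ s] at heq
    have h0 := congrArg (fun w : EuclideanSpace ℂ (Fin 2) => w 0) heq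
    have h1 := congrArg (fun w : EuclideanSpace ℂ (Fin 2) => w 1) heq
    simp only [ContinuousLinearMap.add_apply, ContinuousLinearMap.sub_apply,
      ContinuousLinearMap.smul_apply, ContinuousLinearMap.coe_comp', Function.comp_apply,
      PiLp.add_apply, PiLp.sub_apply, PiLp.smul_apply, smul_eq_mul] at h0 h1
    rw [hσ₁c0, hσ₂c0, hγc0, hσ₂c0, hσ₁c0, hz1 s, hz21 s] at h0
    rw [hσ₁c1, hσ₂c1, hγc1, hσ₂c1, hσ₁c1, hz20 s] at h1
    constructor
    · rw [h1, hy₁ s, hy2]; ring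
    · rw [h0, hy₁ s, hy2]; ring
  have hfun1 : y₁ = fun t => y t 0 := funext hy₁
  have hy1' : ∀ s ∈ I, HasDerivAt y₁ (-(a s) * y₁ s + Complex.I * y2 s) s := by
    intro s hs
    have h0 : HasDerivAt y₁ ((deriv y s) 0) s := by
      rw [hfun1]; exact hasDerivAt_euclidean_apply (hy_diff s hs).hasDerivAt 0
    rwa [(hkey s hs).1] at h0
  have hy2' : ∀ s ∈ I, HasDerivAt y2 ((lam + bb s - cc s) * y₁ s + a s * y2 s) s := by
    intro s hs
    have h0 : HasDerivAt y2 ((deriv y s) 1) s := by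
      rw [hy2]; exact hasDerivAt_euclidean_apply (hy_diff s hs).hasDerivAt 1
    rwa [(hkey s hs).2] at h0
  -- log-derivative of τ
  have hlog' : ∀ s ∈ I, HasDerivAt (fun t => Real.log (τ t).re) ((a s).re) s := by
    intro s hs
    obtain ⟨him, hpos⟩ := hτpos s hs
    have hre : HasDerivAt (fun t => (τ t).re) ((τ s * a s).re) s := by
      exact (Complex.reCLM.hasFDerivAt.comp_hasDerivAt s (hτ' s hs)).congr_deriv (by simp)
    have hlog := (Real.hasDerivAt_log (ne_of_gt hpos)).comp s hre
    have haim : (a s).im = 0 := Complex.conj_eq_iff_im.mp (hareal s hs)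
    have hval : ((τ s).re)⁻¹ * (τ s * a s).re = (a s).re := by
      rw [Complex.mul_re, him, haim]
      field_simp
      ring
    rw [hval] at hlog
    exact hlog
  -- now fix x
  intro x hx
  have hmem : I ∈ nhds x := hI.mem_nhds hx
  -- second derivative of y₁
  have hy1'' : iteratedDeriv 2 y₁ x =
      -(Complex.I * cc x - Complex.I * bb x - a x * a x) * y₁ x
        + (-(a x)) * (-(a x) * y₁ x + Complex.I * y2 x)
        + Complex.I * ((lam + bb x - cc x) * y₁ x + a x * y2 x) := by
    rw [iteratedDeriv_succ, iteratedDeriv_one]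
    have hev : deriv y₁ =ᶠ[nhds x] fun s => -(a s) * y₁ s + Complex.I * y2 s := by
      filter_upwards [hmem] with s hs
      exact (hy1' s hs).deriv
    rw [hev.deriv_eq]
    have h := (((ha' x hx).neg.mul (hy1' x hx)).add ((hy2' x hx).const_mul Complex.I))
    exact h.deriv
  -- value of q
  have hqx : (q x : ℂ) = -2 * (Complex.I * cc x - Complex.I * bb x - a x * a x) := by
    have hq2 : q x = -2 * (Complex.I * cc x - Complex.I * bb x - a x * a x).re := by
      rw [hq x, iteratedDeriv_succ, iteratedDeriv_one]
      congr 1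
      have hev2 : deriv (fun t => Real.log (τ t).re) =ᶠ[nhds x] fun s => (a s).re := by
        filter_upwards [hmem] with s hs
        exact (hlog' s hs).deriv
      rw [hev2.deriv_eq]
      have hre : HasDerivAt (fun s => (a s).re)
          ((Complex.I * cc x - Complex.I * bb x - a x * a x).re) x := by
        exact (Complex.reCLM.hasFDerivAt.comp_hasDerivAt x (ha' x hx)).congr_deriv (by simp)
      exact hre.deriv
    have haim : (a x).im = 0 := Complex.conj_eq_iff_im.mp (hareal x hx)
    have him : (Complex.I * cc x - Complex.I * bb x - a x * a x).im = 0 := by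
      rw [hbc x hx]
      simp [Complex.sub_im, Complex.mul_im, Complex.mul_re, haim]
    rw [hq2]
    push_cast
    rw [mul_comm]
    rw [show ((Complex.I * cc x - Complex.I * bb x - a x * a x).re : ℂ)
        = Complex.I * cc x - Complex.I * bb x - a x * a x from
      Complex.ext (by simp) (by simp [him])]
    ring
  rw [hy1'', hqx]
  ring
end
end

section
/- Let σ₁, σ₂, γ be p×p complex vessel parameters and A a bounded operator on a complex Hilbert space H. Suppose B(x,t) : ℂᵖ → H and 𝕏(x,t) : H → H are smooth and satisfy: ∂ₓ(B)σ₁ = -A B σ₂ - B γ; ∂ₓ𝕏 = B σ₂ B*; ∂ₜB = i A ∂ₓB; ∂ₜ𝕏 = i A B σ₂ B* - i B σ₂ B* A* + i B γ B*; the Lyapunov equation A 𝕏 + 𝕏 A* + B σ₁ B* = 0 with 𝕏* = 𝕏; and 𝕏 invertible on a domain D. Fix λ ∉ spec(A) and define S(λ,x,t) = I - B(x,t)* 𝕏(x,t)⁻¹ (λI - A)⁻¹ B(x,t) σ₁ and H₀(x,t) = B(x,t)* 𝕏(x,t)⁻¹ B(x,t). Then S satisfies the evolution equation ∂ₜS =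 iλ ∂ₓS + i (∂ₓH₀) σ₁ S on D. -/
noncomputable section
open ContinuousLinearMap Matrix

/-- The adjoint as a real-linear continuous map. -/
def adjR {p : ℕ} {H : Type*} [NormedAddCommGroup H] [InnerProductSpace ℂ H] [CompleteSpace H] :
    (EuclideanSpace ℂ (Fin p) →L[ℂ] H) →L[ℝ] (H →L[ℂ] EuclideanSpace ℂ (Fin p)) :=
  LinearMap.mkContinuous
    { toFun := ContinuousLinearMap.adjoint
      map_add' := fun f g => by simp [map_add]
      map_smul' := fun r f => by
        have h : r • f = (r : ℂ) • f := by simp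
        show adjoint (r • f) = r • adjoint f
        rw [h, map_smulₛₗ]; simp }
    1 (fun f => by simp [LinearIsometryEquiv.norm_map])

/-- Composition as a real-bilinear map. -/
def compR {M N P : Type*} [NormedAddCommGroup M] [NormedSpace ℂ M] [NormedAddCommGroup N]
    [NormedSpace ℂ N] [NormedAddCommGroup P] [NormedSpace ℂ P] :
    (N →L[ℂ] P) →L[ℝ] (M →L[ℂ] N) →L[ℝ] (M →L[ℂ] P) :=
  LinearMap.mkContinuous₂
    { toFun := fun f =>
        { toFun := fun g => f ∘L g
          map_add' := fun g₁ g₂ => by ext v; simp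
          map_smul' := fun c g => by ext v; simp }
      map_add' := fun f₁ f₂ => LinearMap.ext fun g => by ext v; simp
      map_smul' := fun c f => LinearMap.ext fun g => by ext v; simp }
    1 (fun f g => by simpa using ContinuousLinearMap.opNorm_comp_le f g)

theorem hasDerivAt_comp_clm {M N P : Type*} [NormedAddCommGroup M] [NormedSpace ℂ M]
    [NormedAddCommGroup N] [NormedSpace ℂ N] [NormedAddCommGroup P] [NormedSpace ℂ P]
    {c : ℝ → (N →L[ℂ] P)} {d : ℝ → (M →L[ℂ] N)} {c' : N →L[ℂ] P} {d' : M →L[ℂ] N} {u : ℝ}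
    (hc : HasDerivAt c c' u) (hd : HasDerivAt d d' u) :
    HasDerivAt (fun s => c s ∘L d s) (c' ∘L d u + c u ∘L d') u := by
  have h1 : HasDerivAt (fun s => compR (M := M) (c s)) (compR (M := M) c') u :=
    (compR (M := M) (N := N) (P := P)).hasFDerivAt.comp_hasDerivAt (l := compR (M := M) (N := N) (P := P)) u hc
  exact h1.clm_apply hd

set_option maxHeartbeats 2000000 in
/-- For the SL-KdV type evolution of a vessel, the transfer function satisfies
`∂ₜS = iλ ∂ₓS + i (∂ₓH₀) σ₁ S`. -/
theorem transfer_function_t_evolution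
    {p : ℕ} {H : Type*} [NormedAddCommGroup H] [InnerProductSpace ℂ H] [CompleteSpace H]
    -- vessel parameters
    (σ₁ σ₂ γ : Matrix (Fin p) (Fin p) ℂ)
    (hσ₁ : σ₁ᴴ = σ₁) (hσ₁inv : IsUnit σ₁) (hσ₂ : σ₂ᴴ = σ₂) (hγ : γᴴ = -γ)
    -- a bounded operator on H
    (A : H →L[ℂ] H)
    (B : ℝ → ℝ → (EuclideanSpace ℂ (Fin p) →L[ℂ] H))
    (X : ℝ → ℝ → (H →L[ℂ] H))
    -- smoothness in (x,t)
    (hBsmooth : ContDiff ℝ (⊤ : ℕ∞) (fun q : ℝ × ℝ => B q.1 q.2))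
    (hXsmooth : ContDiff ℝ (⊤ : ℕ∞) (fun q : ℝ × ℝ => X q.1 q.2))
    -- ∂ₓ(B) σ₁ = -A B σ₂ - B γ
    (hDB : ∀ x t : ℝ, (deriv (fun s => B s t) x) ∘L mOp σ₁ =
      -(A ∘L B x t ∘L mOp σ₂) - B x t ∘L mOp γ)
    -- ∂ₓ𝕏 = B σ₂ B*
    (hDX : ∀ x t : ℝ, deriv (fun s => X s t) x = B x t ∘L mOp σ₂ ∘L adjoint (B x t))
    -- ∂ₜB = i A ∂ₓB
    (hDBt : ∀ x t : ℝ, deriv (fun s => B x s) t =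
      (Complex.I • A) ∘L deriv (fun s => B s t) x)
    -- ∂ₜ𝕏 = i A B σ₂ B* - i B σ₂ B* A* + i B γ B*
    (hDXt : ∀ x t : ℝ, deriv (fun s => X x s) t =
      Complex.I • (A ∘L B x t ∘L mOp σ₂ ∘L adjoint (B x t))
      - Complex.I • (B x t ∘L mOp σ₂ ∘L adjoint (B x t) ∘L adjoint A)
      + Complex.I • (B x t ∘L mOp γ ∘L adjoint (B x t)))
    -- Lyapunov equation and self-adjointness
    (hLyap : ∀ x t : ℝ,
      A ∘L X x t + X x t ∘L adjoint A + B x t ∘L mOp σ₁ ∘L adjoint (B x t) = 0)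
    (hXsa : ∀ x t : ℝ, adjoint (X x t) = X x t)
    -- domain D where 𝕏 is invertible
    (D : Set (ℝ × ℝ)) (hD : IsOpen D)
    (hXinv : ∀ z ∈ D, IsUnit (X z.1 z.2))
    -- the spectral parameter
    (lam : ℂ) (hlam : lam ∉ spectrum ℂ A)
    -- the transfer function S(λ,x,t) and the zeroth moment H₀(x,t)
    (S : ℝ → ℝ → (EuclideanSpace ℂ (Fin p) →L[ℂ] EuclideanSpace ℂ (Fin p)))
    (hS : ∀ x t, S x t = 1 - adjoint (B x t) ∘L Ring.inverse (X x t) ∘L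
        Ring.inverse (algebraMap ℂ (H →L[ℂ] H) lam - A) ∘L B x t ∘L mOp σ₁)
    (H₀ : ℝ → ℝ → (EuclideanSpace ℂ (Fin p) →L[ℂ] EuclideanSpace ℂ (Fin p)))
    (hH₀ : ∀ x t, H₀ x t = adjoint (B x t) ∘L Ring.inverse (X x t) ∘L B x t) :
    -- the evolution equation ∂ₜS = iλ ∂ₓS + i (∂ₓH₀) σ₁ S on D
    ∀ z ∈ D, deriv (fun s => S z.1 s) z.2 =
      (Complex.I * lam) • deriv (fun s => S s z.2) z.1
      + Complex.I • (deriv (fun s => H₀ s z.2) z.1 ∘L mOp σ₁ ∘L S z.1 z.2) := by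
  rintro ⟨x, t⟩ hz
  dsimp only at hz ⊢
  classical
  set E := EuclideanSpace ℂ (Fin p) with hE
  have hXu : IsUnit (X x t) := hXinv (x, t) hz
  have hRu : IsUnit (algebraMap ℂ (H →L[ℂ] H) lam - A) := spectrum.notMem_iff.mp hlam
  set b : E →L[ℂ] H := B x t with hbdef
  set y : H →L[ℂ] H := Ring.inverse (X x t) with hydef
  set r : H →L[ℂ] H := Ring.inverse (algebraMap ℂ (H →L[ℂ] H) lam - A) with hrdef
  set b' : E →L[ℂ] H := deriv (fun s => B s t) x with hb'def
  -- basic derivative facts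
  have hBdx : HasDerivAt (fun s => B s t) b' x := by
    have : DifferentiableAt ℝ (fun s => B s t) x :=
      by have := ((hBsmooth.differentiable (by simp)) (x, t)).comp x
             ((differentiableAt_id (𝕜 := ℝ) (x := x)).prodMk (differentiableAt_const t)); exact this
    exact this.hasDerivAt
  have hXdx : HasDerivAt (fun s => X s t) (b ∘L mOp σ₂ ∘L adjoint b) x := by
    have h : DifferentiableAt ℝ (fun s => X s t) x :=
      by have := ((hXsmooth.differentiable (by simp)) (x, t)).comp x
             ((differentiableAt_id (𝕜 := ℝ) (x := x)).prodMk (differentiableAt_const t)); exact this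
    have h2 := h.hasDerivAt
    rwa [hDX x t] at h2
  have hBdt : HasDerivAt (fun s => B x s) ((Complex.I • A) ∘L b') t := by
    have h : DifferentiableAt ℝ (fun s => B x s) t :=
      ((hBsmooth.differentiable (by simp)) (x, t)).comp t
        ((differentiableAt_const x).prodMk differentiableAt_id)
    have h2 := h.hasDerivAt
    rwa [hDBt x t] at h2
  have hXdt : HasDerivAt (fun s => X x s)
      (Complex.I • (A ∘L b ∘L mOp σ₂ ∘L adjoint b)
      - Complex.I • (b ∘L mOp σ₂ ∘L adjoint b ∘L adjoint A)
      + Complex.I • (b ∘L mOp γ ∘L adjoint b)) t := by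
    have h : DifferentiableAt ℝ (fun s => X x s) t :=
      ((hXsmooth.differentiable (by simp)) (x, t)).comp t
        ((differentiableAt_const x).prodMk differentiableAt_id)
    have h2 := h.hasDerivAt
    rwa [hDXt x t] at h2
  -- derivative of the inverse
  have hYgen : ∀ (g : ℝ → (H →L[ℂ] H)) (u : ℝ) (g' : H →L[ℂ] H),
      HasDerivAt g g' u → g u = X x t →
      HasDerivAt (fun s => Ring.inverse (g s)) (-(y ∘L g' ∘L y)) u := by
    intro g u g' hg hgu
    have h1 : HasFDerivAt Ring.inverse
        (-mulLeftRight ℝ (H →L[ℂ] H) (↑hXu.unit⁻¹) (↑hXu.unit⁻¹)) (g u) := by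
      rw [hgu]
      conv in (X x t) => rw [← hXu.unit_spec]
      exact hasFDerivAt_ringInverse hXu.unit
    have h2 := h1.comp_hasDerivAt u hg
    have h3 : y = ↑hXu.unit⁻¹ := by
      rw [hydef, ← Ring.inverse_unit hXu.unit, hXu.unit_spec]
    convert h2 using 1
    case e'_9 => simp only [ContinuousLinearMap.neg_apply, mulLeftRight_apply, h3, mul_def, comp_assoc]
    all_goals rfl
  have hYdx : HasDerivAt (fun s => Ring.inverse (X s t)) (-(y ∘L (b ∘L mOp σ₂ ∘L adjoint b) ∘L y)) x :=
    hYgen _ x _ hXdx rfl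
  have hYdt : HasDerivAt (fun s => Ring.inverse (X x s))
      (-(y ∘L (Complex.I • (A ∘L b ∘L mOp σ₂ ∘L adjoint b)
      - Complex.I • (b ∘L mOp σ₂ ∘L adjoint b ∘L adjoint A)
      + Complex.I • (b ∘L mOp γ ∘L adjoint b)) ∘L y)) t :=
    hYgen _ t _ hXdt rfl
  -- adjoint commutes with derivatives
  have adjd : ∀ {g : ℝ → (E →L[ℂ] H)} {u : ℝ} {g' : E →L[ℂ] H}, HasDerivAt g g' u →
      HasDerivAt (fun s => adjoint (g s)) (adjoint g') u := by
    intro g u g' hg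
    have h1 : HasFDerivAt (⇑(adjR (p := p) (H := H))) (adjR (p := p) (H := H)) (g u) :=
      ContinuousLinearMap.hasFDerivAt _
    exact h1.comp_hasDerivAt u hg
  -- product rule for the 4-chain
  have chain : ∀ (F : ℝ → (E →L[ℂ] H)) (G : ℝ → (H →L[ℂ] H)) (u : ℝ)
      (F' : E →L[ℂ] H) (G' : H →L[ℂ] H), HasDerivAt F F' u → HasDerivAt G G' u →
      HasDerivAt (fun s => adjoint (F s) ∘L G s ∘L r ∘L F s ∘L mOp σ₁)
        (adjoint F' ∘L (G u ∘L (r ∘L (F u ∘L mOp σ₁)))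
         + (adjoint (F u) ∘L (G' ∘L (r ∘L (F u ∘L mOp σ₁)))
         + adjoint (F u) ∘L (G u ∘L (r ∘L (F' ∘L mOp σ₁))))) u := by
    intro F G u F' G' hF hG
    have h := hasDerivAt_comp_clm (adjd hF) (hasDerivAt_comp_clm hG
      (hasDerivAt_comp_clm (hasDerivAt_const u r)
        (hasDerivAt_comp_clm hF (hasDerivAt_const u (mOp σ₁)))))
    simpa only [comp_zero, zero_comp, add_zero, zero_add, comp_add, comp_assoc] using h
  -- derivative of S in x
  have eSfx : (fun s : ℝ => S s t) = fun s => 1 - adjoint (B s t) ∘L Ring.inverse (X s t)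
      ∘L r ∘L B s t ∘L mOp σ₁ := funext fun s => hS s t
  have eSft : (fun s : ℝ => S x s) = fun s => 1 - adjoint (B x s) ∘L Ring.inverse (X x s)
      ∘L r ∘L B x s ∘L mOp σ₁ := funext fun s => hS x s
  have eHfx : (fun s : ℝ => H₀ s t) = fun s => adjoint (B s t) ∘L Ring.inverse (X s t)
      ∘L B s t := funext fun s => hH₀ s t
  have eSx : deriv (fun s => S s t) x =
      -(adjoint b' ∘L (y ∘L (r ∘L (b ∘L mOp σ₁)))
       + (adjoint b ∘L ((-(y ∘L (b ∘L mOp σ₂ ∘L adjoint b) ∘L y)) ∘L (r ∘L (b ∘L mOp σ₁)))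
       + adjoint b ∘L (y ∘L (r ∘L (b' ∘L mOp σ₁))))) := by
    rw [eSfx]
    have h : HasDerivAt (fun s => 1 - adjoint (B s t) ∘L Ring.inverse (X s t)
        ∘L r ∘L B s t ∘L mOp σ₁)
        (0 - (adjoint b' ∘L (y ∘L (r ∘L (b ∘L mOp σ₁)))
         + (adjoint b ∘L ((-(y ∘L (b ∘L mOp σ₂ ∘L adjoint b) ∘L y)) ∘L (r ∘L (b ∘L mOp σ₁)))
         + adjoint b ∘L (y ∘L (r ∘L (b' ∘L mOp σ₁)))))) x :=
      (hasDerivAt_const x 1).sub (chain _ _ x _ _ hBdx hYdx)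
    rw [h.deriv]
    abel
  have eSt : deriv (fun s => S x s) t =
      -(adjoint ((Complex.I • A) ∘L b') ∘L (y ∘L (r ∘L (b ∘L mOp σ₁)))
       + (adjoint b ∘L ((-(y ∘L (Complex.I • (A ∘L b ∘L mOp σ₂ ∘L adjoint b)
          - Complex.I • (b ∘L mOp σ₂ ∘L adjoint b ∘L adjoint A)
          + Complex.I • (b ∘L mOp γ ∘L adjoint b)) ∘L y)) ∘L (r ∘L (b ∘L mOp σ₁)))
       + adjoint b ∘L (y ∘L (r ∘L (((Complex.I • A) ∘L b') ∘L mOp σ₁))))) := by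
    rw [eSft]
    have h : HasDerivAt (fun s => 1 - adjoint (B x s) ∘L Ring.inverse (X x s)
        ∘L r ∘L B x s ∘L mOp σ₁)
        (0 - (adjoint ((Complex.I • A) ∘L b') ∘L (y ∘L (r ∘L (b ∘L mOp σ₁)))
         + (adjoint b ∘L ((-(y ∘L (Complex.I • (A ∘L b ∘L mOp σ₂ ∘L adjoint b)
            - Complex.I • (b ∘L mOp σ₂ ∘L adjoint b ∘L adjoint A)
            + Complex.I • (b ∘L mOp γ ∘L adjoint b)) ∘L y)) ∘L (r ∘L (b ∘L mOp σ₁)))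
         + adjoint b ∘L (y ∘L (r ∘L (((Complex.I • A) ∘L b') ∘L mOp σ₁)))))) t :=
      (hasDerivAt_const t 1).sub (chain _ _ t _ _ hBdt hYdt)
    rw [h.deriv]
    abel
  have eHx : deriv (fun s => H₀ s t) x =
      adjoint b' ∘L (y ∘L b)
      + (adjoint b ∘L ((-(y ∘L (b ∘L mOp σ₂ ∘L adjoint b) ∘L y)) ∘L b)
      + adjoint b ∘L (y ∘L b')) := by
    rw [eHfx]
    have h : HasDerivAt (fun s => adjoint (B s t) ∘L Ring.inverse (X s t) ∘L B s t)
        (adjoint b' ∘L (y ∘L b)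
         + (adjoint b ∘L ((-(y ∘L (b ∘L mOp σ₂ ∘L adjoint b) ∘L y)) ∘L b)
         + adjoint b ∘L (y ∘L b'))) x := by
      have h0 := hasDerivAt_comp_clm (adjd hBdx) (hasDerivAt_comp_clm hYdx hBdx)
      simpa only [comp_add, add_assoc] using h0
    exact h.deriv
  -- instantiated structure equations
  have hLyap' : A ∘L X x t + X x t ∘L adjoint A + b ∘L mOp σ₁ ∘L adjoint b = 0 := hLyap x t
  have hDB' : b' ∘L mOp σ₁ = -(A ∘L b ∘L mOp σ₂) - b ∘L mOp γ := hDB x t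
  -- inverse identities
  have hyX : y ∘L X x t = 1 := Ring.inverse_mul_cancel _ hXu
  have hXy : X x t ∘L y = 1 := Ring.mul_inverse_cancel _ hXu
  have hyXc : ∀ W : H →L[ℂ] H, y ∘L (X x t ∘L W) = W := by
    intro W
    rw [← comp_assoc, hyX, one_def, id_comp]
  have h4 : (algebraMap ℂ (H →L[ℂ] H) lam - A) * r = 1 := Ring.mul_inverse_cancel _ hRu
  have h5 : r * (algebraMap ℂ (H →L[ℂ] H) lam - A) = 1 := Ring.inverse_mul_cancel _ hRu
  have hAr : A ∘L r = lam • r - 1 := by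
    have h : lam • r - A * r = 1 := by
      rw [← h4, Algebra.algebraMap_eq_smul_one, sub_mul, smul_mul_assoc, one_mul]
    have h2 : A * r = lam • r - 1 := by rw [← h]; abel
    exact h2
  have hrA : r ∘L A = lam • r - 1 := by
    have h : lam • r - r * A = 1 := by
      rw [← h5, Algebra.algebraMap_eq_smul_one, mul_sub, mul_smul_comm, mul_one]
    have h2 : r * A = lam • r - 1 := by rw [← h]; abel
    exact h2
  have hArK : ∀ K : E →L[ℂ] H, A ∘L (r ∘L K) = lam • (r ∘L K) - K := by
    intro K; rw [← comp_assoc, hAr]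
    simp only [sub_comp, smul_comp, one_def, id_comp]
  have hrAK : ∀ K : E →L[ℂ] H, r ∘L (A ∘L K) = lam • (r ∘L K) - K := by
    intro K; rw [← comp_assoc, hrA]
    simp only [sub_comp, smul_comp, one_def, id_comp]
  -- Lyapunov identity
  have hA'y : adjoint A ∘L y = -(y ∘L A) - y ∘L (b ∘L (mOp σ₁ ∘L (adjoint b ∘L y))) := by
    have h2 : y ∘L ((A ∘L X x t + X x t ∘L adjoint A + b ∘L mOp σ₁ ∘L adjoint b) ∘L y) = 0 := by
      rw [hLyap']; simp
    simp only [add_comp, comp_add, comp_assoc] at h2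
    rw [hXy] at h2
    rw [hyXc] at h2
    rw [show A ∘L (1 : H →L[ℂ] H) = A by rw [one_def, comp_id]] at h2
    have h3 : adjoint A ∘L y
        = 0 - (y ∘L A) - y ∘L (b ∘L (mOp σ₁ ∘L (adjoint b ∘L y))) := by
      rw [← h2]; abel
    simpa using h3
  have hA'yK : ∀ K : E →L[ℂ] H, adjoint A ∘L (y ∘L K)
      = -(y ∘L (A ∘L K)) - y ∘L (b ∘L (mOp σ₁ ∘L (adjoint b ∘L (y ∘L K)))) := by
    intro K
    rw [← comp_assoc, hA'y]
    simp only [sub_comp, neg_comp, comp_assoc]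
  have hB'K : ∀ K : E →L[ℂ] E, b' ∘L (mOp σ₁ ∘L K)
      = -(A ∘L (b ∘L (mOp σ₂ ∘L K))) - b ∘L (mOp γ ∘L K) := by
    intro K
    rw [← comp_assoc, hDB']
    simp only [sub_comp, neg_comp, comp_assoc]
  -- adjoint of the time-derivative of B
  have h6 : adjoint (Complex.I • A) = -(Complex.I • adjoint A) := by
    rw [map_smulₛₗ]
    simp [Complex.conj_I]
  have hadj : adjoint ((Complex.I • A) ∘L b')
      = -(Complex.I • (adjoint b' ∘L adjoint A)) := by
    rw [adjoint_comp, h6, comp_neg, comp_smul]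
  -- the final algebraic computation
  rw [eSt, eSx, eHx, hS x t, hadj]
  simp only [comp_add, add_comp, comp_sub, sub_comp, comp_neg, neg_comp, comp_smul, smul_comp,
    comp_assoc, one_def, comp_id, id_comp, smul_sub, smul_add, smul_neg, smul_smul,
    neg_neg, neg_add, neg_sub]
  simp only [hA'yK, hArK, hrAK, hB'K]
  simp only [comp_add, add_comp, comp_sub, sub_comp, comp_neg, neg_comp, comp_smul, smul_comp,
    comp_assoc, smul_sub, smul_add, smul_neg, smul_smul, neg_neg, neg_add, neg_sub]
  module
end
end

section
/- Let σ₁, σ₂, γ be p×p complex vessel parameters, A a bounded operator on a complex Hilbert space H, and suppose B(x) : ℂᵖ → H satisfies (d/dx)(B(x))σ₁ = -A B(x) σ₂ - B(x) γ. Let u(t,x) : ℝ² → ℂᵖ be a twice differentiable input satisfying the admissibility condition -σ₁ ∂ₓu + σ₂ ∂ₜu + γ u = 0, and let 𝔁(t,x) : ℝ² → H be twice differentiable and satisfy the system ∂ₜ𝔁 = A 𝔁 + B(x) σ₁ u and ∂ₓ𝔁 = B(x) σ₂ u. Then the system is compatible: the mixed second partial derivatives of the state are equal, ∂²𝔁/∂x∂t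 = ∂²𝔁/∂t∂x. -/
noncomputable section
open ContinuousLinearMap Matrix

/-- The overdetermined system of a vessel is compatible for admissible inputs: the mixed
second partial derivatives of the state `𝔁(t,x)` coincide. -/
theorem system_is_compatible
    {p : ℕ} {H : Type*} [NormedAddCommGroup H] [InnerProductSpace ℂ H] [CompleteSpace H]
    -- vessel parameters
    (σ₁ σ₂ γ : Matrix (Fin p) (Fin p) ℂ)
    (hσ₁ : σ₁ᴴ = σ₁) (hσ₁inv : IsUnit σ₁) (hσ₂ : σ₂ᴴ = σ₂) (hγ : γᴴ = -γ)
    -- a bounded operator on H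
    (A : H →L[ℂ] H)
    (B : ℝ → (EuclideanSpace ℂ (Fin p) →L[ℂ] H))
    (hBdiff : Differentiable ℝ B)
    -- the vessel equation for B
    (hDB : ∀ x : ℝ, (deriv B x) ∘L mOp σ₁ = -(A ∘L B x ∘L mOp σ₂) - B x ∘L mOp γ)
    -- a twice differentiable admissible input u(t,x)
    (u : ℝ → ℝ → EuclideanSpace ℂ (Fin p))
    (hu_C2 : ContDiff ℝ 2 (fun q : ℝ × ℝ => u q.1 q.2))
    (hu : ∀ t x : ℝ,
      -(mOp σ₁ (deriv (fun s => u t s) x)) + mOp σ₂ (deriv (fun s => u s x) t)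
        + mOp γ (u t x) = 0)
    -- a twice differentiable state 𝔁(t,x) of the system
    (xs : ℝ → ℝ → H)
    (hxs_C2 : ContDiff ℝ 2 (fun q : ℝ × ℝ => xs q.1 q.2))
    (hxt : ∀ t x : ℝ, deriv (fun s => xs s x) t = A (xs t x) + (B x ∘L mOp σ₁) (u t x))
    (hxx : ∀ t x : ℝ, deriv (fun s => xs t s) x = (B x ∘L mOp σ₂) (u t x)) :
    ∀ t x : ℝ,
      deriv (fun s => deriv (fun r => xs s r) x) t =
      deriv (fun r => deriv (fun s => xs s r) t) x := by
  have hud : Differentiable ℝ (fun q : ℝ × ℝ => u q.1 q.2) :=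
    hu_C2.differentiable (by norm_num)
  have hxd : Differentiable ℝ (fun q : ℝ × ℝ => xs q.1 q.2) :=
    hxs_C2.differentiable (by norm_num)
  have hut : ∀ t x : ℝ, DifferentiableAt ℝ (fun s => u s x) t := fun t x =>
    by have := (hud (t, x)).comp t (differentiableAt_id.prodMk (differentiableAt_const x) : DifferentiableAt ℝ (fun s : ℝ => (s, x)) t); exact this
  have hux : ∀ t x : ℝ, DifferentiableAt ℝ (fun s => u t s) x := fun t x =>
    by have := (hud (t, x)).comp x ((differentiableAt_const t).prodMk differentiableAt_id : DifferentiableAt ℝ (fun s : ℝ => (t, s)) x); exact this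
  have hxsx : ∀ t x : ℝ, DifferentiableAt ℝ (fun r => xs t r) x := fun t x =>
    by have := (hxd (t, x)).comp x ((differentiableAt_const t).prodMk differentiableAt_id : DifferentiableAt ℝ (fun s : ℝ => (t, s)) x); exact this
  intro t x
  set ut' := deriv (fun s => u s x) t with hut'
  set ux' := deriv (fun s => u t s) x with hux'
  -- LHS
  have h1 : (fun s => deriv (fun r => xs s r) x) = fun s => (B x ∘L mOp σ₂) (u s x) :=
    funext fun s => hxx s x
  have hL : HasDerivAt (fun s => (B x ∘L mOp σ₂) (u s x)) ((B x ∘L mOp σ₂) ut') t :=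
    ((B x ∘L mOp σ₂).restrictScalars ℝ).hasFDerivAt.comp_hasDerivAt t (hut t x).hasDerivAt
  -- RHS
  have h2 : (fun r => deriv (fun s => xs s r) t)
      = fun r => A (xs t r) + (B r) (mOp σ₁ (u t r)) := funext fun r => hxt t r
  have hxsd : HasDerivAt (fun r => xs t r) ((B x ∘L mOp σ₂) (u t x)) x := by
    rw [← hxx t x]; exact (hxsx t x).hasDerivAt
  have hA : HasDerivAt (fun r => A (xs t r)) (A ((B x ∘L mOp σ₂) (u t x))) x :=
    (A.restrictScalars ℝ).hasFDerivAt.comp_hasDerivAt x hxsd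
  have hv : HasDerivAt (fun r => mOp σ₁ (u t r)) (mOp σ₁ ux') x :=
    ((mOp σ₁).restrictScalars ℝ).hasFDerivAt.comp_hasDerivAt x (hux t x).hasDerivAt
  have hB : HasDerivAt B (deriv B x) x := (hBdiff x).hasDerivAt
  set R := ContinuousLinearMap.restrictScalarsL ℂ (EuclideanSpace ℂ (Fin p)) H ℝ ℝ with hR'
  have hB' : HasDerivAt (fun r => R (B r)) (R (deriv B x)) x :=
    R.hasFDerivAt.comp_hasDerivAt x hB
  have hR : HasDerivAt (fun r => A (xs t r) + (B r) (mOp σ₁ (u t r)))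
      (A ((B x ∘L mOp σ₂) (u t x)) + ((deriv B x) (mOp σ₁ (u t x)) + (B x) (mOp σ₁ ux'))) x :=
    hA.add (hB'.clm_apply hv)
  rw [h1, h2, hL.deriv, hR.deriv]
  -- use the vessel equation for B
  have hDBx : (deriv B x) (mOp σ₁ (u t x))
      = -(A ((B x) (mOp σ₂ (u t x)))) - (B x) (mOp γ (u t x)) := by
    have := congrArg (fun (L : EuclideanSpace ℂ (Fin p) →L[ℂ] H) => L (u t x)) (hDB x)
    simpa using this
  -- use admissibility
  have hadm : mOp σ₁ ux' = mOp σ₂ ut' + mOp γ (u t x) := by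
    have := hu t x
    rw [← hux', ← hut'] at this
    linear_combination (norm := abel) -this
  rw [hDBx, hadm]
  simp only [ContinuousLinearMap.comp_apply, map_add]
  abel
end
end
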